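/- If a randomized 2-selection mechanism with predictions is impartial, α-consistent, and β-robust, then β ≤ 3/4 and α + β ≤ 3/2. -/

import Mathlib

/-- `E` has no self-loops. -/
def NoLoops {n : ℕ} (E : Finset (Fin n × Fin n)) : Prop := ∀ i, (i, i) ∉ E

/-- The indegree of vertex `i` in the graph with edge set `E`. -/
def indeg {n : ℕ} (E : Finset (Fin n × Fin n)) (i : Fin n) : ℕ :=
  (E.filter (fun e => e.2 = i)).card

/-- The total indegree of a set `S` of vertices. -/
def indegS {n : ℕ} (E : Finset (Fin n × Fin n)) (S : Finset (Fin n)) : ℕ :=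
  ∑ i ∈ S, indeg E i

/-- `Δ_k(G)`: the maximum total indegree of a set of `k` vertices. -/
def maxDeg {n : ℕ} (k : ℕ) (E : Finset (Fin n × Fin n)) : ℕ :=
  (Finset.powersetCard k Finset.univ).sup (indegS E)

/-- A (randomized) selection mechanism with predictions: for each `n`,
given a predicted set and a graph, it assigns a selection probability to each vertex. -/
abbrev Mech : Type :=
  ∀ n : ℕ, Finset (Fin n) → Finset (Fin n × Fin n) → Fin n → ℝ

/-- The probabilities lie in `[0,1]` and sum to at most `k` on every valid input. -/
def ValidMech (k : ℕ) (f : Mech) : Prop :=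
  ∀ (n : ℕ) (Sh : Finset (Fin n)) (E : Finset (Fin n × Fin n)),
    Sh.card = k → NoLoops E →
      (∀ i, 0 ≤ f n Sh E i ∧ f n Sh E i ≤ 1) ∧ (∑ i, f n Sh E i) ≤ (k : ℝ)

/-- Impartiality: the probability of selecting `i` does not depend on `i`'s outgoing edges. -/
def Impartial (k : ℕ) (f : Mech) : Prop :=
  ∀ (n : ℕ) (Sh : Finset (Fin n)) (E E' : Finset (Fin n × Fin n)) (i : Fin n),
    Sh.card = k → NoLoops E → NoLoops E' →
    E.filter (fun e => e.1 ≠ i) = E'.filter (fun e => e.1 ≠ i) →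
    f n Sh E i = f n Sh E' i

/-- `α`-consistency: an `α`-approximation whenever the prediction is accurate. -/
def Consistent (k : ℕ) (α : ℝ) (f : Mech) : Prop :=
  ∀ (n : ℕ) (Sh : Finset (Fin n)) (E : Finset (Fin n × Fin n)),
    Sh.card = k → NoLoops E → indegS E Sh = maxDeg k E →
    α * (maxDeg k E : ℝ) ≤ ∑ i, f n Sh E i * (indeg E i : ℝ)

/-- `β`-robustness: a `β`-approximation regardless of the prediction. -/
def Robust (k : ℕ) (β : ℝ) (f : Mech) : Prop :=
  ∀ (n : ℕ) (Sh : Finset (Fin n)) (E : Finset (Fin n × Fin n)),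
    Sh.card = k → NoLoops E →
    β * (maxDeg k E : ℝ) ≤ ∑ i, f n Sh E i * (indeg E i : ℝ)

/-! Take three vertices and the prediction `{0, 1}`. Write `A i = outStar {i}` for the graph in
which `i` points to both other vertices, `B i j = outStar {i, j}` for the one in which `i` and `j`
do, and `F = outStar univ` for the complete graph. By impartiality the probabilities that `B i j`
assigns to `i`, `j` and the third vertex `l` are those that `A j`, `A i` and `F` assign to them,
so the budget `2` of each `B i j` bounds `∑ i, welfare (A i) + welfare F / 2` by `6`. Robustness
makes each `welfare (A i)` at least `2 β` and `welfare F` at least `4 β`, whence `8 β ≤ 6`. The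
prediction is optimal for `A 2` and `F`, so there consistency improves the bounds to `2 α` and
`4 α`, whence `4 α + 4 β ≤ 6`. -/

open Finset

def outStar {n : ℕ} (S : Finset (Fin n)) : Finset (Fin n × Fin n) :=
  (S ×ˢ univ).filter fun e => e.1 ≠ e.2

def welfare (f : Mech) {n : ℕ} (Sh : Finset (Fin n)) (E : Finset (Fin n × Fin n)) : ℝ :=
  ∑ i, f n Sh E i * (indeg E i : ℝ)

section outStar

variable {n : ℕ}

theorem noLoops_outStar (S : Finset (Fin n)) : NoLoops (outStar S) := by
  simp [NoLoops, outStar]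

theorem filter_outStar_fst_ne (S : Finset (Fin n)) (i : Fin n) :
    (outStar S).filter (fun e => e.1 ≠ i) = outStar (S.erase i) := by
  ext ⟨a, b⟩
  simp only [outStar, mem_filter, mem_product, mem_erase, mem_univ]
  tauto

theorem Impartial.apply_outStar_eq {k : ℕ} {f : Mech} (himp : Impartial k f)
    {Sh : Finset (Fin n)} (hSh : Sh.card = k) {S T : Finset (Fin n)} {i : Fin n}
    (h : S.erase i = T.erase i) : f n Sh (outStar S) i = f n Sh (outStar T) i :=
  himp n Sh _ _ i hSh (noLoops_outStar S) (noLoops_outStar T) <| by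
    rw [filter_outStar_fst_ne, filter_outStar_fst_ne, h]

theorem indeg_outStar (S : Finset (Fin n)) (j : Fin n) :
    indeg (outStar S) j = (S.erase j).card := by
  have h : (outStar S).filter (fun e => e.2 = j) = (S.erase j).image fun a => (a, j) := by
    ext ⟨a, b⟩
    simp only [outStar, mem_filter, mem_product, mem_univ, mem_image, mem_erase, Prod.mk.injEq]
    aesop
  rw [indeg, h, card_image_of_injective _ (Prod.mk_left_injective j)]

end outStar

theorem outStar_pair_budget_le {n k : ℕ} {f : Mech} (hvalid : ValidMech k f) (himp : Impartial k f)
    {Sh : Finset (Fin n)} (hSh : Sh.card = k) {i j l : Fin n}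
    (hij : i ≠ j) (hil : i ≠ l) (hjl : j ≠ l) {T : Finset (Fin n)} (hT : T.erase l = {i, j}) :
    f n Sh (outStar {j}) i + f n Sh (outStar {i}) j + f n Sh (outStar T) l ≤ k := by
  set B := outStar ({i, j} : Finset (Fin n))
  obtain ⟨hbounds, hsum⟩ := hvalid n Sh B hSh (noLoops_outStar _)
  have hi : f n Sh B i = f n Sh (outStar {j}) i :=
    himp.apply_outStar_eq hSh (by ext; simp only [mem_erase, mem_insert, mem_singleton]; tauto)
  have hj : f n Sh B j = f n Sh (outStar {i}) j :=
    himp.apply_outStar_eq hSh (by ext; simp only [mem_erase, mem_insert, mem_singleton]; tauto)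
  have hl : f n Sh B l = f n Sh (outStar T) l :=
    himp.apply_outStar_eq hSh (by rw [hT]; exact erase_eq_of_notMem (by simp [hil.symm, hjl.symm]))
  calc f n Sh (outStar {j}) i + f n Sh (outStar {i}) j + f n Sh (outStar T) l
      = ∑ v ∈ {i, j, l}, f n Sh B v := by
        rw [sum_insert (by simp [hij, hil]), sum_pair hjl, hi, hj, hl, add_assoc]
    _ ≤ ∑ v, f n Sh B v := sum_le_univ_sum_of_nonneg fun v => (hbounds v).1
    _ ≤ k := hsum

theorem welfare_outStar_singletons_add_half_univ_le {f : Mech} (hvalid : ValidMech 2 f)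
    (himp : Impartial 2 f) {Sh : Finset (Fin 3)} (hSh : Sh.card = 2) :
    welfare f Sh (outStar {0}) + welfare f Sh (outStar {1}) + welfare f Sh (outStar {2}) +
      welfare f Sh (outStar univ) / 2 ≤ 6 := by
  have h01 := outStar_pair_budget_le hvalid himp hSh (i := 0) (j := 1) (l := 2) (T := univ)
    (by decide) (by decide) (by decide) (by decide)
  have h02 := outStar_pair_budget_le hvalid himp hSh (i := 0) (j := 2) (l := 1) (T := univ)
    (by decide) (by decide) (by decide) (by decide)
  have h12 := outStar_pair_budget_le hvalid himp hSh (i := 1) (j := 2) (l := 0) (T := univ)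
    (by decide) (by decide) (by decide) (by decide)
  simp [welfare, Fin.sum_univ_three, indeg_outStar] at h01 h02 h12 ⊢
  linarith

theorem upper_bound_two_selection (α β : ℝ) (f : Mech)
    (hvalid : ValidMech 2 f) (himp : Impartial 2 f)
    (hcons : Consistent 2 α f) (hrob : Robust 2 β f) :
    β ≤ 3 / 4 ∧ α + β ≤ 3 / 2 := by
  set Sh : Finset (Fin 3) := {0, 1}
  have hSh : Sh.card = 2 := rfl
  have hbudget := welfare_outStar_singletons_add_half_univ_le hvalid himp hSh
  have hmax (i : Fin 3) : maxDeg 2 (outStar {i}) = 2 := by revert i; decide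
  have hmax_univ : maxDeg 2 (outStar (univ : Finset (Fin 3))) = 4 := by decide
  have hrob_single (i : Fin 3) : β * 2 ≤ welfare f Sh (outStar {i}) := by
    simpa [welfare, hmax] using hrob 3 Sh _ hSh (noLoops_outStar {i})
  have hrob_univ : β * 4 ≤ welfare f Sh (outStar univ) := by
    simpa [welfare, hmax_univ] using hrob 3 Sh _ hSh (noLoops_outStar univ)
  have hcons_two : α * 2 ≤ welfare f Sh (outStar {2}) := by
    simpa [welfare, hmax] using hcons 3 Sh _ hSh (noLoops_outStar {2}) (by decide)
  have hcons_univ : α * 4 ≤ welfare f Sh (outStar univ) := by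
    simpa [welfare, hmax_univ] using hcons 3 Sh _ hSh (noLoops_outStar univ) (by decide)
  constructor <;> linarith [hrob_single 0, hrob_single 1, hrob_single 2]
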